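/- Assume there is a constant J ∈ [0,∞) with ‖ξ(t)‖₋ ≤ J e^{−2Bt} for all t ∈ [0,∞). Let f₀ ∈ F, set F# := ‖f₀‖ + NJ, and suppose 4KN·F# ≤ 1. Then VP(f₀) has a global solution φ : [0,∞) → F and ‖φ(t)‖ ≤ F#·𝒳(4KN·F#)·e^{−Bt} for all t ∈ [0,∞), where 𝒳 : [0,1] → [1,2] is defined by 𝒳(z) := (1 − √(1−z))/(z/2) for z ∈ (0,1] and 𝒳(0) := 1. -/

import Mathlib

/-
Run the Picard iteration `φₙ₊₁ = Φ φₙ`, `φ₀ = 0`, of the Duhamel map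
`Φ φ t = e^{tA} f₀ + ∫₀ᵗ e^{(t-s)A} (𝒫(φ s, φ s) + ξ s) ds` in the weighted norm
`sup_t e^{Bt} ‖φ t‖`. The smoothing estimate gives: if `‖φ‖ ≤ a` then `‖Φ φ‖ ≤ F# + KN a²`,
and if moreover `‖φ'‖ ≤ a'`, `‖φ - φ'‖ ≤ d` then `‖Φ φ - Φ φ'‖ ≤ KN (a + a') d`. Hence
`‖φₙ‖ ≤ aₙ` and `‖φₙ₊₁ - φₙ‖ ≤ aₙ₊₁ - aₙ` for the scalar iterates `aₙ₊₁ = F# + KN aₙ²`,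
`a₀ = 0`, which increase to a limit below the smaller root `F# 𝒳(4KN F#)` of
`KN R² - R + F# = 0`. The differences telescope, so `φₙ` converges uniformly to a solution; no
contraction property of `Φ` is needed, which matters in the critical case `4KN F# = 1`.
-/

open Set MeasureTheory Filter Topology

noncomputable def chiFactor (z : ℝ) : ℝ :=
  if z = 0 then 1 else (1 - Real.sqrt (1 - z)) / (z / 2)

/-- `F * chiFactor (4 k F) = (1 - √(1 - 4kF)) / (2k)` is the smaller root of `k R² - R + F`. -/
lemma add_mul_sq_chiFactor {k F : ℝ} (hk : 0 < k) (hF : 0 ≤ F) (h : 4 * k * F ≤ 1) :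
    F + k * (F * chiFactor (4 * k * F)) ^ 2 = F * chiFactor (4 * k * F) := by
  rcases hF.eq_or_lt with rfl | hF
  · simp
  have hz : 4 * k * F ≠ 0 := by positivity
  have hroot := Real.sq_sqrt (show 0 ≤ 1 - 4 * k * F by linarith)
  rw [chiFactor, if_neg hz]
  set w := Real.sqrt (1 - 4 * k * F)
  field_simp
  linear_combination 4 * hroot

def quadIter (c k : ℝ) : ℕ → ℝ
  | 0 => 0
  | n + 1 => c + k * quadIter c k n ^ 2

section quadIter

variable {c k : ℝ}

lemma quadIter_nonneg (hc : 0 ≤ c) (hk : 0 ≤ k) : ∀ n, 0 ≤ quadIter c k n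
  | 0 => le_rfl
  | n + 1 => by simp only [quadIter]; positivity

lemma quadIter_le {R : ℝ} (hc : 0 ≤ c) (hk : 0 ≤ k) (hR : c + k * R ^ 2 ≤ R) :
    ∀ n, quadIter c k n ≤ R
  | 0 => by simp only [quadIter]; nlinarith
  | n + 1 => by
    have h := quadIter_le hc hk hR n
    have h0 := quadIter_nonneg hc hk n
    simp only [quadIter]
    nlinarith [mul_le_mul_of_nonneg_left (pow_le_pow_left₀ h0 h 2) hk]

lemma quadIter_monotone (hc : 0 ≤ c) (hk : 0 ≤ k) : Monotone (quadIter c k) := by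
  refine monotone_nat_of_le_succ fun n => ?_
  induction n with
  | zero => simpa [quadIter] using hc
  | succ n ih =>
    have h0 := quadIter_nonneg hc hk n
    simp only [quadIter] at ih ⊢
    nlinarith [mul_le_mul_of_nonneg_left (pow_le_pow_left₀ h0 ih 2) hk]

end quadIter

section Telescoping

variable {E : Type*} [NormedAddCommGroup E] {f : ℕ → E} {b : ℕ → ℝ}

lemma norm_sub_le_sub_of_norm_succ_sub_le (h : ∀ n, ‖f (n + 1) - f n‖ ≤ b (n + 1) - b n)
    {n m : ℕ} (hnm : n ≤ m) : ‖f m - f n‖ ≤ b m - b n := by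
  induction m, hnm using Nat.le_induction with
  | base => simp
  | succ m _ ih =>
    calc ‖f (m + 1) - f n‖ ≤ ‖f (m + 1) - f m‖ + ‖f m - f n‖ :=
          norm_sub_le_norm_sub_add_norm_sub _ _ _
      _ ≤ b (m + 1) - b n := by linarith [h m]

lemma cauchySeq_of_norm_succ_sub_le {ℓ : ℝ} (h : ∀ n, ‖f (n + 1) - f n‖ ≤ b (n + 1) - b n)
    (hb : Tendsto b atTop (𝓝 ℓ)) : CauchySeq f := by
  have hmono : Monotone b :=
    monotone_nat_of_le_succ fun n => by linarith [h n, norm_nonneg (f (n + 1) - f n)]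
  refine cauchySeq_of_le_tendsto_0' (fun n => ℓ - b n) (fun n m hnm => ?_) ?_
  · rw [dist_comm, dist_eq_norm]
    linarith [norm_sub_le_sub_of_norm_succ_sub_le h hnm, hmono.ge_of_tendsto hb m]
  · simpa using hb.const_sub ℓ

lemma norm_sub_le_of_tendsto_of_norm_succ_sub_le {ℓ : ℝ} {y : E}
    (h : ∀ n, ‖f (n + 1) - f n‖ ≤ b (n + 1) - b n) (hb : Tendsto b atTop (𝓝 ℓ))
    (hf : Tendsto f atTop (𝓝 y)) (n : ℕ) : ‖y - f n‖ ≤ ℓ - b n :=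
  le_of_tendsto_of_tendsto ((hf.sub_const (f n)).norm) (hb.sub_const (b n))
    (eventually_atTop.2 ⟨n, fun _ hm => norm_sub_le_sub_of_norm_succ_sub_le h hm⟩)

end Telescoping

section Majorant

variable {α E : Type*} [TopologicalSpace α] [NormedAddCommGroup E]

structure WeightBounded (S : Set α) (w : α → ℝ) (a : ℝ) (φ : α → E) : Prop where
  continuousOn : ContinuousOn φ S
  norm_le : ∀ t ∈ S, ‖φ t‖ ≤ a * w t

lemma WeightBounded.nonneg {S : Set α} {w : α → ℝ} {a : ℝ} {φ : α → E}
    (hφ : WeightBounded S w a φ) {t : α} (ht : t ∈ S) (hw : 0 < w t) : 0 ≤ a :=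
  nonneg_of_mul_nonneg_left ((norm_nonneg _).trans (hφ.norm_le t ht)) hw

structure QuadraticMajorant (S : Set α) (w : α → ℝ) (c k : ℝ) (T : (α → E) → α → E) : Prop where
  weightBounded : ∀ φ a, WeightBounded S w a φ → WeightBounded S w (c + k * a ^ 2) (T φ)
  norm_sub_le : ∀ φ φ' a a' d, WeightBounded S w a φ → WeightBounded S w a' φ' →
    (∀ t ∈ S, ‖φ t - φ' t‖ ≤ d * w t) → ∀ t ∈ S, ‖T φ t - T φ' t‖ ≤ k * (a + a') * d * w t

variable {S : Set α} {w : α → ℝ} {T : (α → E) → α → E} {c k : ℝ}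

namespace QuadraticMajorant

lemma weightBounded_iterate (hT : QuadraticMajorant S w c k T) :
    ∀ n, WeightBounded S w (quadIter c k n) (T^[n] 0)
  | 0 => ⟨continuousOn_const, fun t _ => by simp [quadIter]⟩
  | n + 1 => by
    rw [Function.iterate_succ_apply']
    exact hT.weightBounded _ _ (hT.weightBounded_iterate n)

lemma norm_iterate_succ_sub_le (hT : QuadraticMajorant S w c k T) :
    ∀ n, ∀ t ∈ S, ‖T^[n + 1] 0 t - T^[n] 0 t‖ ≤
      quadIter c k (n + 1) * w t - quadIter c k n * w t
  | 0, t, ht => by simpa [quadIter] using (hT.weightBounded_iterate 1).norm_le t ht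
  | n + 1, t, ht => by
    have h := hT.norm_sub_le _ _ _ _ _ (hT.weightBounded_iterate (n + 1))
      (hT.weightBounded_iterate n)
      (fun t ht => (hT.norm_iterate_succ_sub_le n t ht).trans_eq (sub_mul _ _ _).symm) t ht
    rw [← Function.iterate_succ_apply' T n] at h
    rw [Function.iterate_succ_apply' T (n + 1)]
    convert h using 1
    rw [show quadIter c k (n + 1 + 1) = c + k * quadIter c k (n + 1) ^ 2 from rfl,
      show quadIter c k (n + 1) = c + k * quadIter c k n ^ 2 from rfl]
    ring

end QuadraticMajorant

lemma exists_limit_of_norm_succ_sub_le [CompleteSpace E] {φ : ℕ → α → E} {b : ℕ → ℝ} {L : ℝ}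
    (hw1 : ∀ t ∈ S, w t ≤ 1) (hφ : ∀ n, ContinuousOn (φ n) S) (hb_mono : Monotone b)
    (hb : Tendsto b atTop (𝓝 L))
    (h : ∀ n, ∀ t ∈ S, ‖φ (n + 1) t - φ n t‖ ≤ b (n + 1) * w t - b n * w t) :
    ∃ ψ, ContinuousOn ψ S ∧ ∀ n, ∀ t ∈ S, ‖ψ t - φ n t‖ ≤ (L - b n) * w t := by
  set ψ : α → E := fun t => limUnder atTop (fun n => φ n t)
  have hψ_dist : ∀ n, ∀ t ∈ S, ‖ψ t - φ n t‖ ≤ (L - b n) * w t := fun n t ht => by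
    have hbw := hb.mul_const (w t)
    rw [sub_mul]
    exact norm_sub_le_of_tendsto_of_norm_succ_sub_le (fun n => h n t ht) hbw
      (cauchySeq_of_norm_succ_sub_le (fun n => h n t ht) hbw).tendsto_limUnder n
  refine ⟨ψ, TendstoUniformlyOn.continuousOn (p := atTop) ?_ (Frequently.of_forall hφ),
    hψ_dist⟩
  rw [Metric.tendstoUniformlyOn_iff]
  intro ε hε
  filter_upwards [(hb.const_sub L).eventually_lt_const (by simpa using hε)] with n hn t ht
  rw [dist_eq_norm]
  calc ‖ψ t - φ n t‖ ≤ (L - b n) * w t := hψ_dist n t ht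
    _ ≤ L - b n := mul_le_of_le_one_right (by linarith [hb_mono.ge_of_tendsto hb n]) (hw1 t ht)
    _ < ε := hn

theorem QuadraticMajorant.exists_fixedPoint [CompleteSpace E] {R : ℝ}
    (hw0 : ∀ t ∈ S, 0 ≤ w t) (hw1 : ∀ t ∈ S, w t ≤ 1)
    (hc : 0 ≤ c) (hk : 0 ≤ k) (hR : c + k * R ^ 2 ≤ R) (hT : QuadraticMajorant S w c k T) :
    ∃ φ, WeightBounded S w R φ ∧ ∀ t ∈ S, φ t = T φ t := by
  set a := quadIter c k
  have ha_mono := quadIter_monotone hc hk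
  obtain ⟨L, hL⟩ : ∃ L, Tendsto a atTop (𝓝 L) :=
    ⟨_, tendsto_atTop_ciSup ha_mono ⟨R, forall_mem_range.2 (quadIter_le hc hk hR)⟩⟩
  have hLR : L ≤ R := le_of_tendsto' hL (quadIter_le hc hk hR)
  have hgap : Tendsto (fun n => L - a n) atTop (𝓝 0) := by simpa using hL.const_sub L
  obtain ⟨φ, hφc, hφ_dist⟩ := exists_limit_of_norm_succ_sub_le hw1
    (fun n => (hT.weightBounded_iterate n).continuousOn) ha_mono hL hT.norm_iterate_succ_sub_le
  have hφ : WeightBounded S w L φ := ⟨hφc, by simpa [a, quadIter] using hφ_dist 0⟩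
  refine ⟨φ, ⟨hφc, fun t ht => (hφ.norm_le t ht).trans (by gcongr; exact hw0 t ht)⟩,
    fun t ht => tendsto_nhds_unique (f := fun n => T^[n + 1] 0 t) (l := atTop) ?_ ?_⟩
  · refine tendsto_iff_norm_sub_tendsto_zero.2 (squeeze_zero (fun _ => norm_nonneg _)
      (fun n => (norm_sub_rev _ _).trans_le (hφ_dist (n + 1) t ht)) ?_)
    simpa using (hgap.comp (tendsto_add_atTop_nat 1)).mul_const (w t)
  · refine tendsto_iff_norm_sub_tendsto_zero.2 (squeeze_zero (fun _ => norm_nonneg _)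
      (fun n => ?_) (g := fun n => k * (a n + L) * (L - a n) * w t) ?_)
    · rw [Function.iterate_succ_apply']
      exact hT.norm_sub_le _ _ _ _ _ (hT.weightBounded_iterate n) hφ
        (fun s hs => (norm_sub_rev _ _).trans_le (hφ_dist n s hs)) t ht
    · simpa using (((hL.add_const L).const_mul k).mul hgap).mul_const (w t)

end Majorant

lemma continuousOn_of_locally_lipschitz {E : Type*} [SeminormedAddCommGroup E] {S : Set ℝ}
    (hS : IsClosed S) {f : ℝ → E}
    (hf : ∀ C : Set ℝ, IsCompact C → C ⊆ S →
      ∃ M : ℝ, ∀ t ∈ C, ∀ t' ∈ C, ‖f t - f t'‖ ≤ M * |t - t'|) :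
    ContinuousOn f S := by
  refine continuousOn_of_locally_continuousOn fun x _ => ⟨Metric.ball x 1, Metric.isOpen_ball,
    Metric.mem_ball_self one_pos, ?_⟩
  obtain ⟨M, hM⟩ := hf (S ∩ Metric.closedBall x 1) ((isCompact_closedBall x 1).inter_left hS)
    inter_subset_left
  have hlip : LipschitzOnWith (Real.toNNReal M) f (S ∩ Metric.closedBall x 1) :=
    LipschitzOnWith.of_dist_le_mul fun t ht t' ht' => by
      rw [dist_eq_norm, Real.dist_eq]
      exact (hM t ht t' ht').trans
        (mul_le_mul_of_nonneg_right (Real.le_coe_toNNReal M) (abs_nonneg _))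
  exact hlip.continuousOn.mono (inter_subset_inter_right S Metric.ball_subset_closedBall)

lemma integrableOn_Ioc_of_le_div_rpow {f : ℝ → ℝ} {σ C δ : ℝ} (hσ : 0 < σ) (hδ : 0 < δ)
    (hf : ContinuousOn f (Ioi 0)) (hf0 : ∀ t > 0, 0 ≤ f t)
    (hC : ∀ t ∈ Ioo 0 δ, f t ≤ C / t ^ (1 - σ)) (T : ℝ) : IntegrableOn f (Ioc 0 T) := by
  have hnear : IntegrableOn f (Ioc 0 (δ / 2)) := by
    have hpow : IntegrableOn (fun t : ℝ => C * t ^ (σ - 1)) (Ioc 0 (δ / 2)) :=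
      (intervalIntegrable_iff_integrableOn_Ioc_of_le (by linarith)).1
        ((intervalIntegral.intervalIntegrable_rpow' (by linarith)).const_mul C)
    refine hpow.mono' ((hf.mono fun t ht => ht.1).aestronglyMeasurable measurableSet_Ioc) ?_
    filter_upwards [ae_restrict_mem measurableSet_Ioc] with t ht
    rw [Real.norm_of_nonneg (hf0 t ht.1), show σ - 1 = -(1 - σ) by ring, Real.rpow_neg ht.1.le,
      ← div_eq_mul_inv]
    exact hC t ⟨ht.1, by linarith [ht.2]⟩
  rcases le_or_gt T (δ / 2) with hT | hT
  · exact hnear.mono_set (Ioc_subset_Ioc_right hT)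
  have hfar : ContinuousOn f (Icc (δ / 2) T) := hf.mono fun t ht => (half_pos hδ).trans_le ht.1
  rw [← Ioc_union_Ioc_eq_Ioc (by linarith) hT.le]
  exact hnear.union (hfar.integrableOn_Icc.mono_set Ioc_subset_Icc_self)

section Bilinear

variable {E G : Type*} [SeminormedAddCommGroup E] [NormedSpace ℝ E]
  [SeminormedAddCommGroup G] [NormedSpace ℝ G] {P : E →L[ℝ] E →L[ℝ] G} {K : ℝ}

lemma norm_apply_self_add_le (hP : ∀ x y, ‖P x y‖ ≤ K * ‖x‖ * ‖y‖) (hK : 0 ≤ K)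
    {x : E} {y : G} {a J e : ℝ} (hx : ‖x‖ ≤ a * e) (hy : ‖y‖ ≤ J * e ^ 2) :
    ‖P x x + y‖ ≤ (K * a ^ 2 + J) * e ^ 2 := by
  have hsq : ‖x‖ * ‖x‖ ≤ (a * e) * (a * e) := mul_self_le_mul_self (norm_nonneg x) hx
  calc ‖P x x + y‖ ≤ K * ‖x‖ * ‖x‖ + J * e ^ 2 :=
        (norm_add_le _ _).trans (add_le_add (hP x x) hy)
    _ ≤ (K * a ^ 2 + J) * e ^ 2 := by nlinarith [mul_le_mul_of_nonneg_left hsq hK]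

lemma norm_apply_self_sub_apply_self_le (hP : ∀ x y, ‖P x y‖ ≤ K * ‖x‖ * ‖y‖) (hK : 0 ≤ K)
    {x x' : E} {a a' d e : ℝ} (hx : ‖x‖ ≤ a * e) (hx' : ‖x'‖ ≤ a' * e)
    (hd : ‖x - x'‖ ≤ d * e) :
    ‖P x x - P x' x'‖ ≤ K * (a + a') * d * e ^ 2 := by
  have hsplit : P x x - P x' x' = P x (x - x') + P (x - x') x' := by
    simp only [map_sub, sub_apply]; abel
  have h1 : ‖x‖ * ‖x - x'‖ ≤ (a * e) * (d * e) :=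
    mul_le_mul hx hd (norm_nonneg _) ((norm_nonneg x).trans hx)
  have h2 : ‖x - x'‖ * ‖x'‖ ≤ (d * e) * (a' * e) :=
    mul_le_mul hd hx' (norm_nonneg _) ((norm_nonneg _).trans hd)
  rw [hsplit]
  calc ‖P x (x - x') + P (x - x') x'‖ ≤ K * ‖x‖ * ‖x - x'‖ + K * ‖x - x'‖ * ‖x'‖ :=
        (norm_add_le _ _).trans (add_le_add (hP _ _) (hP _ _))
    _ ≤ K * (a + a') * d * e ^ 2 := by
        nlinarith [mul_le_mul_of_nonneg_left h1 hK, mul_le_mul_of_nonneg_left h2 hK]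

end Bilinear

lemma exp_neg_two_mul_mul_eq_sq (B s : ℝ) :
    Real.exp (-(2 * B * s)) = Real.exp (-(B * s)) ^ 2 := by
  rw [sq, ← Real.exp_add]; ring_nf

local notation "expDecay" B => fun s : ℝ => Real.exp (-(B * s))

lemma intervalIntegral_eq_setIntegral_indicator {E : Type*} [NormedAddCommGroup E]
    [NormedSpace ℝ E] (f : ℝ → E) {t T : ℝ} (ht : 0 ≤ t) (htT : t ≤ T) :
    ∫ u in (0:ℝ)..t, f u = ∫ u in Ioc 0 T, (Ioc 0 t).indicator f u := by
  rw [intervalIntegral.integral_of_le ht, setIntegral_indicator measurableSet_Ioc,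
    inter_eq_right.2 (Ioc_subset_Ioc_right htT)]

lemma intervalIntegral_comp_sub_self {E : Type*} [NormedAddCommGroup E] [NormedSpace ℝ E]
    (g : ℝ → ℝ → E) (t : ℝ) :
    ∫ s in (0:ℝ)..t, g (t - s) s = ∫ u in (0:ℝ)..t, g u (t - u) := by
  simpa using intervalIntegral.integral_comp_sub_left (fun u => g u (t - u)) (a := 0) (b := t) t

/-- `W t` models `e^{tA}` as a map `F₋ → F` for `t > 0`, with smoothing rate `μ`. -/
structure SmoothingKernel {F Fm : Type*} [NormedAddCommGroup F] [NormedAddCommGroup Fm]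
    (W : ℝ → Fm → F) (μ : ℝ → ℝ) (B N : ℝ) : Prop where
  continuousOn : ContinuousOn (fun p : Fm × ℝ => W p.2 p.1) (univ ×ˢ Ioi 0)
  map_sub : ∀ t > 0, ∀ f g, W t (f - g) = W t f - W t g
  nonneg : ∀ t > 0, 0 ≤ μ t
  norm_le : ∀ t > 0, ∀ f, ‖W t f‖ ≤ μ t * Real.exp (-(B * t)) * ‖f‖
  integrableOn : ∀ T, IntegrableOn μ (Ioc 0 T)
  integral_le : ∀ t ≥ 0, ∫ s in (0:ℝ)..t, μ (t - s) * Real.exp (-(B * s)) ≤ N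

namespace SmoothingKernel

variable {F Fm : Type*} [NormedAddCommGroup F] [NormedAddCommGroup Fm]
  {W : ℝ → Fm → F} {μ : ℝ → ℝ} {B N c : ℝ} {ψ : ℝ → Fm}

lemma norm_apply_le (hW : SmoothingKernel W μ B N) {u t : ℝ} {x : Fm} (hu : 0 < u)
    (hx : ‖x‖ ≤ c * Real.exp (-(2 * B * (t - u)))) :
    ‖W u x‖ ≤ c * Real.exp (-(B * t)) * (μ u * Real.exp (-(B * (t - u)))) := by
  have hexp : Real.exp (-(B * u)) * Real.exp (-(2 * B * (t - u)))
      = Real.exp (-(B * t)) * Real.exp (-(B * (t - u))) := by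
    rw [← Real.exp_add, ← Real.exp_add]; ring_nf
  have hμ := hW.nonneg u hu
  calc ‖W u x‖ ≤ μ u * Real.exp (-(B * u)) * (c * Real.exp (-(2 * B * (t - u)))) :=
        (hW.norm_le u hu x).trans (mul_le_mul_of_nonneg_left hx (by positivity))
    _ = c * μ u * (Real.exp (-(B * u)) * Real.exp (-(2 * B * (t - u)))) := by ring
    _ = c * Real.exp (-(B * t)) * (μ u * Real.exp (-(B * (t - u)))) := by rw [hexp]; ring

lemma norm_apply_sub_le (hW : SmoothingKernel W μ B N)
    (hψ : WeightBounded (Ici 0) (expDecay (2 * B)) c ψ) {t u : ℝ} (hu : u ∈ Ioc 0 t) :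
    ‖W u (ψ (t - u))‖ ≤ c * Real.exp (-(B * t)) * (μ u * Real.exp (-(B * (t - u)))) :=
  hW.norm_apply_le hu.1 (hψ.norm_le _ (sub_nonneg.2 hu.2))

lemma norm_indicator_apply_sub_le (hW : SmoothingKernel W μ B N) (hB : 0 ≤ B)
    (hψ : WeightBounded (Ici 0) (expDecay (2 * B)) c ψ) {t u : ℝ} (ht : 0 ≤ t) (hu : 0 < u) :
    ‖(Ioc 0 t).indicator (fun v => W v (ψ (t - v))) u‖ ≤ c * μ u := by
  have hc := hψ.nonneg self_mem_Ici (Real.exp_pos _)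
  have hμ := hW.nonneg u hu
  rw [norm_indicator_eq_indicator_norm]
  refine indicator_apply_le' (fun hut => ?_) fun _ => mul_nonneg hc hμ
  have he₁ : Real.exp (-(B * t)) ≤ 1 := Real.exp_le_one_iff.2 (by nlinarith)
  have he₂ : Real.exp (-(B * (t - u))) ≤ 1 := Real.exp_le_one_iff.2 (by nlinarith [hut.2])
  calc ‖W u (ψ (t - u))‖ ≤ c * Real.exp (-(B * t)) * (μ u * Real.exp (-(B * (t - u)))) :=
        hW.norm_apply_sub_le hψ hut
    _ ≤ c * 1 * (μ u * 1) := by gcongr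
    _ = c * μ u := by ring

lemma continuousOn_apply_sub (hW : SmoothingKernel W μ B N) (hψ : ContinuousOn ψ (Ici 0))
    (t : ℝ) : ContinuousOn (fun u => W u (ψ (t - u))) (Ioc 0 t) :=
  hW.continuousOn.comp
    ((hψ.comp (by fun_prop) fun u hu => sub_nonneg.2 hu.2).prodMk continuousOn_id)
    fun u hu => ⟨mem_univ _, hu.1⟩

lemma continuousAt_indicator_apply_sub (hW : SmoothingKernel W μ B N)
    (hψ : ContinuousOn ψ (Ici 0)) {t₀ u : ℝ} (hu : 0 < u) (hne : u ≠ t₀) :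
    ContinuousAt (fun t => (Ioc 0 t).indicator (fun v => W v (ψ (t - v))) u) t₀ := by
  rcases hne.lt_or_gt with hlt | hgt
  · have hψ_at : ContinuousAt ψ (t₀ - u) := hψ.continuousAt (Ici_mem_nhds (by linarith))
    have hW_at : ContinuousAt (fun p : Fm × ℝ => W p.2 p.1) (ψ (t₀ - u), u) :=
      hW.continuousOn.continuousAt ((isOpen_univ.prod isOpen_Ioi).mem_nhds ⟨mem_univ _, hu⟩)
    have hpair : ContinuousAt (fun t : ℝ => (ψ (t - u), u)) t₀ :=
      (hψ_at.comp (f := fun t : ℝ => t - u) (by fun_prop)).prodMk continuousAt_const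
    refine ContinuousAt.congr (hW_at.comp (f := fun t : ℝ => (ψ (t - u), u)) hpair) ?_
    filter_upwards [eventually_gt_nhds hlt] with t ht
    exact (indicator_of_mem (show u ∈ Ioc 0 t from ⟨hu, ht.le⟩) fun v => W v (ψ (t - v))).symm
  · refine continuousAt_const.congr (f := fun _ => (0 : F)) ?_
    filter_upwards [eventually_lt_nhds hgt] with t ht
    exact (indicator_of_notMem (fun h => (h.2.trans_lt ht).false) _).symm

lemma integrableOn_kernel (hW : SmoothingKernel W μ B N) {t : ℝ} (ht : 0 ≤ t) :
    IntegrableOn (fun u => μ u * Real.exp (-(B * (t - u)))) (Ioc 0 t) :=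
  (intervalIntegrable_iff_integrableOn_Ioc_of_le ht).1
    (((intervalIntegrable_iff_integrableOn_Ioc_of_le ht).2 (hW.integrableOn t)).mul_continuousOn
      (by fun_prop))

lemma integrableOn_apply_sub (hW : SmoothingKernel W μ B N)
    (hψ : WeightBounded (Ici 0) (expDecay (2 * B)) c ψ) {t : ℝ} (ht : 0 ≤ t) :
    IntegrableOn (fun u => W u (ψ (t - u))) (Ioc 0 t) := by
  refine ((hW.integrableOn_kernel ht).const_mul (c * Real.exp (-(B * t)))).mono'
    ((hW.continuousOn_apply_sub hψ.continuousOn t).aestronglyMeasurable measurableSet_Ioc) ?_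
  filter_upwards [ae_restrict_mem measurableSet_Ioc] with u hu
  exact hW.norm_apply_sub_le hψ hu

lemma intervalIntegrable (hW : SmoothingKernel W μ B N)
    (hψ : WeightBounded (Ici 0) (expDecay (2 * B)) c ψ) {t : ℝ} (ht : 0 ≤ t) :
    IntervalIntegrable (fun s => W (t - s) (ψ s)) volume 0 t := by
  simpa using (((intervalIntegrable_iff_integrableOn_Ioc_of_le ht).2
    (hW.integrableOn_apply_sub hψ ht)).comp_sub_left t).symm

variable [NormedSpace ℝ F]

lemma norm_integral_le (hW : SmoothingKernel W μ B N)
    (hψ : WeightBounded (Ici 0) (expDecay (2 * B)) c ψ) {t : ℝ} (ht : 0 ≤ t) :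
    ‖∫ s in (0:ℝ)..t, W (t - s) (ψ s)‖ ≤ N * c * Real.exp (-(B * t)) := by
  have hc := hψ.nonneg self_mem_Ici (Real.exp_pos _)
  have hkernel : ∫ u in (0:ℝ)..t, μ u * Real.exp (-(B * (t - u))) ≤ N := by
    simpa [intervalIntegral_comp_sub_self (fun u s => μ u * Real.exp (-(B * s)))]
      using hW.integral_le t ht
  rw [intervalIntegral_comp_sub_self (fun u s => W u (ψ s)), intervalIntegral.integral_of_le ht]
  calc ‖∫ u in Ioc 0 t, W u (ψ (t - u))‖
        ≤ ∫ u in Ioc 0 t, c * Real.exp (-(B * t)) * (μ u * Real.exp (-(B * (t - u)))) :=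
        norm_integral_le_of_norm_le ((hW.integrableOn_kernel ht).const_mul _)
          ((ae_restrict_mem measurableSet_Ioc).mono fun u hu => hW.norm_apply_sub_le hψ hu)
    _ = c * Real.exp (-(B * t)) * ∫ u in (0:ℝ)..t, μ u * Real.exp (-(B * (t - u))) := by
        rw [integral_const_mul, intervalIntegral.integral_of_le ht]
    _ ≤ c * Real.exp (-(B * t)) * N := by gcongr
    _ = N * c * Real.exp (-(B * t)) := by ring

lemma integral_sub (hW : SmoothingKernel W μ B N) {c' : ℝ} {ψ' : ℝ → Fm}
    (hψ : WeightBounded (Ici 0) (expDecay (2 * B)) c ψ)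
    (hψ' : WeightBounded (Ici 0) (expDecay (2 * B)) c' ψ') {t : ℝ} (ht : 0 ≤ t) :
    (∫ s in (0:ℝ)..t, W (t - s) (ψ s)) - ∫ s in (0:ℝ)..t, W (t - s) (ψ' s)
      = ∫ s in (0:ℝ)..t, W (t - s) (ψ s - ψ' s) := by
  rw [← intervalIntegral.integral_sub (hW.intervalIntegrable hψ ht)
      (hW.intervalIntegrable hψ' ht),
    intervalIntegral_comp_sub_self (fun u s => W u (ψ s) - W u (ψ' s)),
    intervalIntegral_comp_sub_self (fun u s => W u (ψ s - ψ' s))]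
  refine intervalIntegral.integral_congr_ae (Eventually.of_forall fun u hu => ?_)
  rw [uIoc_of_le ht] at hu
  exact (hW.map_sub u hu.1 _ _).symm

/-- Dominated convergence after writing the integral over a fixed interval `(0, t₀ + 1]`; the
integrand is dominated by `c μ`. -/
lemma continuousOn_integral (hW : SmoothingKernel W μ B N) (hB : 0 ≤ B)
    (hψ : WeightBounded (Ici 0) (expDecay (2 * B)) c ψ) :
    ContinuousOn (fun t => ∫ s in (0:ℝ)..t, W (t - s) (ψ s)) (Ici 0) := by
  intro t₀ ht₀
  set T := t₀ + 1
  have hnear : ∀ᶠ t in 𝓝[Ici 0] t₀, t ∈ Icc 0 T :=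
    inter_mem_nhdsWithin _ (Iic_mem_nhds (by linarith))
  have hrep : ∀ t ∈ Icc 0 T, ∫ s in (0:ℝ)..t, W (t - s) (ψ s)
      = ∫ u in Ioc 0 T, (Ioc 0 t).indicator (fun v => W v (ψ (t - v))) u := fun t ht => by
    rw [intervalIntegral_comp_sub_self (fun u s => W u (ψ s)),
      intervalIntegral_eq_setIntegral_indicator _ ht.1 ht.2]
  refine ContinuousWithinAt.congr_of_eventuallyEq ?_ (hnear.mono hrep)
    (hrep t₀ ⟨ht₀, by linarith⟩)
  refine continuousWithinAt_of_dominated (bound := fun u => c * μ u) ?_ ?_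
    ((hW.integrableOn T).const_mul c) ?_
  · filter_upwards [hnear] with t ht
    exact ((hW.integrableOn_apply_sub hψ ht.1).integrable_indicator
      measurableSet_Ioc).integrableOn.aestronglyMeasurable
  · filter_upwards [hnear] with t ht
    filter_upwards [ae_restrict_mem measurableSet_Ioc] with u hu
    exact hW.norm_indicator_apply_sub_le hB hψ ht.1 hu.1
  · filter_upwards [ae_restrict_mem measurableSet_Ioc,
      ae_restrict_of_ae (Measure.ae_ne volume t₀)] with u hu hne
    exact (hW.continuousAt_indicator_apply_sub hψ.continuousOn hu.1 hne).continuousWithinAt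

end SmoothingKernel

section Picard

variable {F Fm : Type*} [NormedAddCommGroup F] [NormedSpace ℝ F]
  [NormedAddCommGroup Fm] [NormedSpace ℝ Fm]

noncomputable def picardMap (V : ℝ → F → F) (W : ℝ → Fm → F) (P : F →L[ℝ] F →L[ℝ] Fm)
    (ξ : ℝ → Fm) (f₀ : F) (φ : ℝ → F) (t : ℝ) : F :=
  V t f₀ + ∫ s in (0:ℝ)..t, W (t - s) (P (φ s) (φ s) + ξ s)

variable {V : ℝ → F → F} {W : ℝ → Fm → F} {P : F →L[ℝ] F →L[ℝ] Fm} {ξ : ℝ → Fm} {f₀ : F}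
  {μ : ℝ → ℝ} {B N K J a a' d : ℝ} {φ φ' : ℝ → F}

lemma weightBounded_apply_self_add (hP : ∀ x y, ‖P x y‖ ≤ K * ‖x‖ * ‖y‖) (hK : 0 ≤ K)
    (hξ : ContinuousOn ξ (Ici 0)) (hξ_le : ∀ t ≥ 0, ‖ξ t‖ ≤ J * Real.exp (-(2 * B * t)))
    (hφ : WeightBounded (Ici 0) (expDecay B) a φ) :
    WeightBounded (Ici 0) (expDecay (2 * B)) (K * a ^ 2 + J) (fun s => P (φ s) (φ s) + ξ s) where
  continuousOn :=
    (P.continuous₂.comp_continuousOn (hφ.continuousOn.prodMk hφ.continuousOn)).add hξ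
  norm_le s hs := by
    simp only [exp_neg_two_mul_mul_eq_sq] at hξ_le ⊢
    exact norm_apply_self_add_le hP hK (hφ.norm_le s hs) (hξ_le s hs)

lemma picardMap_weightBounded (hW : SmoothingKernel W μ B N) (hB : 0 ≤ B)
    (hV : ContinuousOn (fun t => V t f₀) (Ici 0))
    (hV_le : ∀ t ≥ 0, ‖V t f₀‖ ≤ Real.exp (-(B * t)) * ‖f₀‖)
    (hP : ∀ x y, ‖P x y‖ ≤ K * ‖x‖ * ‖y‖) (hK : 0 ≤ K)
    (hξ : ContinuousOn ξ (Ici 0)) (hξ_le : ∀ t ≥ 0, ‖ξ t‖ ≤ J * Real.exp (-(2 * B * t)))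
    (hφ : WeightBounded (Ici 0) (expDecay B) a φ) :
    WeightBounded (Ici 0) (expDecay B) (‖f₀‖ + N * J + K * N * a ^ 2)
      (picardMap V W P ξ f₀ φ) := by
  have hψ := weightBounded_apply_self_add hP hK hξ hξ_le hφ
  refine ⟨hV.add (hW.continuousOn_integral hB hψ), fun t ht => ?_⟩
  calc ‖picardMap V W P ξ f₀ φ t‖
        ≤ Real.exp (-(B * t)) * ‖f₀‖ + N * (K * a ^ 2 + J) * Real.exp (-(B * t)) :=
        (norm_add_le _ _).trans (add_le_add (hV_le t ht) (hW.norm_integral_le hψ ht))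
    _ = (‖f₀‖ + N * J + K * N * a ^ 2) * Real.exp (-(B * t)) := by ring

lemma norm_picardMap_sub_le (hW : SmoothingKernel W μ B N)
    (hP : ∀ x y, ‖P x y‖ ≤ K * ‖x‖ * ‖y‖) (hK : 0 ≤ K)
    (hξ : ContinuousOn ξ (Ici 0)) (hξ_le : ∀ t ≥ 0, ‖ξ t‖ ≤ J * Real.exp (-(2 * B * t)))
    (hφ : WeightBounded (Ici 0) (expDecay B) a φ)
    (hφ' : WeightBounded (Ici 0) (expDecay B) a' φ')
    (hd : ∀ t ∈ Ici 0, ‖φ t - φ' t‖ ≤ d * Real.exp (-(B * t))) {t : ℝ} (ht : t ∈ Ici 0) :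
    ‖picardMap V W P ξ f₀ φ t - picardMap V W P ξ f₀ φ' t‖
      ≤ K * N * (a + a') * d * Real.exp (-(B * t)) := by
  have hδ : WeightBounded (Ici 0) (expDecay (2 * B)) (K * (a + a') * d)
      (fun s => P (φ s) (φ s) - P (φ' s) (φ' s)) :=
    ⟨(P.continuous₂.comp_continuousOn (hφ.continuousOn.prodMk hφ.continuousOn)).sub
      (P.continuous₂.comp_continuousOn (hφ'.continuousOn.prodMk hφ'.continuousOn)),
      fun s hs => by
        rw [exp_neg_two_mul_mul_eq_sq]
        exact norm_apply_self_sub_apply_self_le hP hK (hφ.norm_le s hs) (hφ'.norm_le s hs)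
          (hd s hs)⟩
  rw [picardMap, picardMap, add_sub_add_left_eq_sub,
    hW.integral_sub (weightBounded_apply_self_add hP hK hξ hξ_le hφ)
      (weightBounded_apply_self_add hP hK hξ hξ_le hφ') ht]
  simp only [add_sub_add_right_eq_sub]
  calc _ ≤ N * (K * (a + a') * d) * Real.exp (-(B * t)) := hW.norm_integral_le hδ ht
    _ = K * N * (a + a') * d * Real.exp (-(B * t)) := by ring

end Picard

theorem stmt_8_general
    {F Fm : Type*}
    [NormedAddCommGroup F] [NormedSpace ℝ F] [CompleteSpace F]
    [NormedAddCommGroup Fm] [NormedSpace ℝ Fm]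
    -- F is a dense subspace of Fm, with continuous inclusion ι
    (ι : F →L[ℝ] Fm) (hι_inj : Function.Injective ι)
    -- the semigroup (e^{tA})_{t ≥ 0} on Fm, strongly continuous
    (U : ℝ → Fm →L[ℝ] Fm)
    -- e^{tA} maps F into F (lift V), giving a strongly continuous semigroup on F
    (V : ℝ → F → F)
    (hVcont : ContinuousOn (fun p : F × ℝ => V p.2 p.1) (univ ×ˢ Ici (0:ℝ)))
    -- e^{tA} maps Fm into F for t > 0 (lift W), continuously on Fm × (0,∞)
    (W : ℝ → Fm → F)
    (hW : ∀ t > (0:ℝ), ∀ f : Fm, ι (W t f) = U t f)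
    (hWcont : ContinuousOn (fun p : Fm × ℝ => W p.2 p.1) (univ ×ˢ Ioi (0:ℝ)))
    -- the continuous bilinear map 𝒫 with constant K, and the forcing ξ
    (PP : F →L[ℝ] F →L[ℝ] Fm) (K : ℝ) (hK : 0 < K)
    (hPP : ∀ f g : F, ‖PP f g‖ ≤ K * ‖f‖ * ‖g‖)
    (ξ : ℝ → Fm)
    (hξ : ∀ C : Set ℝ, IsCompact C → C ⊆ Ici (0:ℝ) →
      ∃ M : ℝ, ∀ t ∈ C, ∀ t' ∈ C, ‖ξ t - ξ t'‖ ≤ M * |t - t'|)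
    -- constants B, N and the exponential semigroup estimators (P4'), (P5')
    (B N : ℝ) (hB : 0 ≤ B) (hN : 0 < N)
    (hu_bd : ∀ t ≥ (0:ℝ), ∀ x : F, ‖V t x‖ ≤ Real.exp (-(B * t)) * ‖x‖)
    (μm : ℝ → ℝ)
    (hμm_cont : ContinuousOn μm (Ioi (0:ℝ)))
    (hμm_pos : ∀ t > (0:ℝ), 0 < μm t)
    (hμm_bd : ∀ t > (0:ℝ), ∀ f : Fm, ‖W t f‖ ≤ μm t * Real.exp (-(B * t)) * ‖f‖)
    (σ : ℝ) (hσ : σ ∈ Ioc (0:ℝ) 1)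
    (hμm_O : ∃ C : ℝ, ∃ δ > (0:ℝ), ∀ t ∈ Ioo (0:ℝ) δ, μm t ≤ C / t ^ (1 - σ))
    (hμm_N : ∀ t ≥ (0:ℝ), (∫ s in (0:ℝ)..t, μm (t - s) * Real.exp (-(B * s))) ≤ N)
    -- exponentially decaying forcing
    (J : ℝ) (hJ : 0 ≤ J)
    (hξb : ∀ t ≥ (0:ℝ), ‖ξ t‖ ≤ J * Real.exp (-(2 * B * t)))
    -- datum, F# and the smallness condition
    (f₀ : F) (Fs : ℝ) (hFs : Fs = ‖f₀‖ + N * J)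
    (hcond : 4 * K * N * Fs ≤ 1)
    -- the function 𝒳
    (XX : ℝ → ℝ)
    (hXX : ∀ z : ℝ, XX z = if z = 0 then 1 else (1 - Real.sqrt (1 - z)) / (z / 2)) :
    ∃ φ : ℝ → F, ContinuousOn φ (Ici (0:ℝ)) ∧
      (∀ t ≥ (0:ℝ), φ t = V t f₀ + ∫ s in (0:ℝ)..t, W (t - s) (PP (φ s) (φ s) + ξ s)) ∧
      ∀ t ≥ (0:ℝ), ‖φ t‖ ≤ Fs * XX (4 * K * N * Fs) * Real.exp (-(B * t)) := by
  subst hFs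
  have hKN : 0 < K * N := mul_pos hK hN
  have hkernel : SmoothingKernel W μm B N :=
    { continuousOn := hWcont
      map_sub := fun t ht f g => hι_inj (by rw [map_sub, hW t ht, hW t ht, hW t ht, map_sub])
      nonneg := fun t ht => (hμm_pos t ht).le
      norm_le := hμm_bd
      integrableOn := by
        obtain ⟨C, δ, hδ, hC⟩ := hμm_O
        exact integrableOn_Ioc_of_le_div_rpow hσ.1 hδ hμm_cont (fun t ht => (hμm_pos t ht).le)
          hC
      integral_le := hμm_N }
  have hξc : ContinuousOn ξ (Ici 0) := continuousOn_of_locally_lipschitz isClosed_Ici hξ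
  have hVc : ContinuousOn (fun t => V t f₀) (Ici 0) :=
    hVcont.comp (continuous_const.prodMk continuous_id).continuousOn fun t ht => ⟨mem_univ _, ht⟩
  have hFs : 0 ≤ ‖f₀‖ + N * J := by positivity
  have hR := add_mul_sq_chiFactor hKN hFs (by linarith)
  rw [show XX = chiFactor from funext hXX, show 4 * K * N = 4 * (K * N) by ring]
  obtain ⟨φ, hφ, hfix⟩ := QuadraticMajorant.exists_fixedPoint
    (S := Ici 0) (w := fun t => Real.exp (-(B * t))) (T := picardMap V W PP ξ f₀)
    (fun t _ => (Real.exp_pos _).le)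
    (fun t ht => Real.exp_le_one_iff.2 (by nlinarith [mem_Ici.1 ht])) hFs hKN.le hR.le
    ⟨fun φ a hφ => picardMap_weightBounded hkernel hB hVc (fun t ht => hu_bd t ht f₀) hPP hK.le
        hξc hξb hφ,
      fun φ φ' a a' d hφ hφ' hd t ht =>
        norm_picardMap_sub_le hkernel hPP hK.le hξc hξb hφ hφ' hd ht⟩
  exact ⟨φ, hφ.continuousOn, hfix, hφ.norm_le⟩

/-- Global existence with exponentially decaying forcing (zero approximate solution):
if `‖ξ(t)‖₋ ≤ J e^{−2Bt}`, `F# = ‖f₀‖ + NJ` and `4KN F# ≤ 1`, then `VP(f₀)` has a global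
solution `φ` with `‖φ(t)‖ ≤ F# 𝒳(4KN F#) e^{−Bt}`. -/
theorem stmt_8
    {F Fm : Type*}
    [NormedAddCommGroup F] [NormedSpace ℝ F] [CompleteSpace F]
    [NormedAddCommGroup Fm] [NormedSpace ℝ Fm] [CompleteSpace Fm]
    -- F is a dense subspace of Fm, with continuous inclusion ι
    (ι : F →L[ℝ] Fm) (hι_inj : Function.Injective ι) (hι_dense : DenseRange ι)
    -- the semigroup (e^{tA})_{t ≥ 0} on Fm, strongly continuous
    (U : ℝ → Fm →L[ℝ] Fm)
    (hU0 : U 0 = ContinuousLinearMap.id ℝ Fm)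
    (hUsem : ∀ s ≥ (0:ℝ), ∀ t ≥ (0:ℝ), U (s + t) = (U s).comp (U t))
    (hUsc : ∀ f : Fm, ContinuousOn (fun t => U t f) (Ici (0:ℝ)))
    -- e^{tA} maps F into F (lift V), giving a strongly continuous semigroup on F
    (V : ℝ → F → F)
    (hV : ∀ t ≥ (0:ℝ), ∀ x : F, ι (V t x) = U t (ι x))
    (hVcont : ContinuousOn (fun p : F × ℝ => V p.2 p.1) (univ ×ˢ Ici (0:ℝ)))
    -- e^{tA} maps Fm into F for t > 0 (lift W), continuously on Fm × (0,∞)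
    (W : ℝ → Fm → F)
    (hW : ∀ t > (0:ℝ), ∀ f : Fm, ι (W t f) = U t f)
    (hWcont : ContinuousOn (fun p : Fm × ℝ => W p.2 p.1) (univ ×ˢ Ioi (0:ℝ)))
    -- the continuous bilinear map 𝒫 with constant K, and the forcing ξ
    (PP : F →L[ℝ] F →L[ℝ] Fm) (K : ℝ) (hK : 0 < K)
    (hPP : ∀ f g : F, ‖PP f g‖ ≤ K * ‖f‖ * ‖g‖)
    (ξ : ℝ → Fm)
    (hξ : ∀ C : Set ℝ, IsCompact C → C ⊆ Ici (0:ℝ) →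
      ∃ M : ℝ, ∀ t ∈ C, ∀ t' ∈ C, ‖ξ t - ξ t'‖ ≤ M * |t - t'|)
    -- constants B, N and the exponential semigroup estimators (P4'), (P5')
    (B N : ℝ) (hB : 0 ≤ B) (hN : 0 < N)
    (hu_bd : ∀ t ≥ (0:ℝ), ∀ x : F, ‖V t x‖ ≤ Real.exp (-(B * t)) * ‖x‖)
    (μm : ℝ → ℝ)
    (hμm_cont : ContinuousOn μm (Ioi (0:ℝ)))
    (hμm_pos : ∀ t > (0:ℝ), 0 < μm t)
    (hμm_bd : ∀ t > (0:ℝ), ∀ f : Fm, ‖W t f‖ ≤ μm t * Real.exp (-(B * t)) * ‖f‖)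
    (σ : ℝ) (hσ : σ ∈ Ioc (0:ℝ) 1)
    (hμm_O : ∃ C : ℝ, ∃ δ > (0:ℝ), ∀ t ∈ Ioo (0:ℝ) δ, μm t ≤ C / t ^ (1 - σ))
    (hμm_N : ∀ t ≥ (0:ℝ), (∫ s in (0:ℝ)..t, μm (t - s) * Real.exp (-(B * s))) ≤ N)
    -- exponentially decaying forcing
    (J : ℝ) (hJ : 0 ≤ J)
    (hξb : ∀ t ≥ (0:ℝ), ‖ξ t‖ ≤ J * Real.exp (-(2 * B * t)))
    -- datum, F# and the smallness condition
    (f₀ : F) (Fs : ℝ) (hFs : Fs = ‖f₀‖ + N * J)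
    (hcond : 4 * K * N * Fs ≤ 1)
    -- the function 𝒳
    (XX : ℝ → ℝ)
    (hXX : ∀ z : ℝ, XX z = if z = 0 then 1 else (1 - Real.sqrt (1 - z)) / (z / 2)) :
    ∃ φ : ℝ → F, ContinuousOn φ (Ici (0:ℝ)) ∧
      (∀ t ≥ (0:ℝ), φ t = V t f₀ + ∫ s in (0:ℝ)..t, W (t - s) (PP (φ s) (φ s) + ξ s)) ∧
      ∀ t ≥ (0:ℝ), ‖φ t‖ ≤ Fs * XX (4 * K * N * Fs) * Real.exp (-(B * t)) :=
  stmt_8_general ι hι_inj U V hVcont W hW hWcont PP K hK hPP ξ hξ B N hB hN hu_bd μm hμm_cont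
    hμm_pos hμm_bd σ hσ hμm_O hμm_N J hJ hξb f₀ Fs hFs hcond XX hXX
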